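/- arXiv:2503.18890 — 2 statements merged into one kernel-verified Lean document; each statement's English description precedes it below -/
import Mathlib

section
/- Let N be a positive integer and let a be an integer with 1 ≤ a ≤ N − 1. Let H be the Hartley matrix of size 2N, and let v : ZMod (2N) → ℂ be the vector v = (e_a − e_{2N−a})/√2, where e_x denotes the standard basis vector supported at x and a, 2N−a are taken as elements of ZMod (2N). Then for every y ∈ ZMod (2N), (H.mulVec v)(y) = sin(π·a·y.val/N)/√N. -/
/-- The `cas` function: `cas x = cos x + sin x`. -/
noncomputable def cas (x : ℝ) : ℝ := Real.cos x + Real.sin x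

/-- The Hartley matrix of size `M`, indexed by `ZMod M`. -/
noncomputable def hartleyMatrix (M : ℕ) : Matrix (ZMod M) (ZMod M) ℂ :=
  fun a y => ((cas (2 * Real.pi * a.val * y.val / M) / Real.sqrt M : ℝ) : ℂ)

lemma hartley_aux (N a t : ℕ) (hN : 0 < N) (ha : a ≤ 2*N) :
    (cas (2*Real.pi*t*a/(2*N)) - cas (2*Real.pi*t*((2*N - a : ℕ):ℝ)/(2*N))) / Real.sqrt (2*N) / Real.sqrt 2
      = Real.sin (Real.pi*a*t/N) / Real.sqrt N := by
  have hNr : (N:ℝ) ≠ 0 := Nat.cast_ne_zero.mpr hN.ne'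
  have h1 : (2*Real.pi*t*((2*N - a : ℕ):ℝ)/(2*N)) = (t:ℝ)*(2*Real.pi) - Real.pi*a*t/N := by
    push_cast [Nat.cast_sub ha]; field_simp
  have h2 : (2*Real.pi*t*a/(2*N)) = Real.pi*a*t/N := by field_simp
  rw [h1, h2]
  unfold cas
  rw [show (t:ℝ)*(2*Real.pi) = ((2*t:ℕ):ℝ)*Real.pi by push_cast; ring]
  rw [Real.cos_sub, Real.sin_sub, Real.sin_nat_mul_pi]
  rw [show ((2*t:ℕ):ℝ)*Real.pi = (t:ℝ)*(2*Real.pi) by push_cast; ring, Real.cos_nat_mul_two_pi]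
  have hs : Real.sqrt (2*N) = Real.sqrt 2 * Real.sqrt N := by
    rw [← Real.sqrt_mul (by norm_num)]
  have h22 : Real.sqrt 2 * Real.sqrt 2 = 2 := Real.mul_self_sqrt (by norm_num)
  have hN2 : Real.sqrt N ≠ 0 := by positivity
  have hsq2 : Real.sqrt 2 ≠ 0 := by positivity
  rw [hs]
  field_simp
  ring_nf
  rw [Real.sq_sqrt (by norm_num : (0:ℝ) ≤ 2)]

/-- Applying the Hartley matrix of size `2N` to the vector `(e_a - e_{2N-a})/√2`
yields the vector `y ↦ sin(π a y / N)/√N`. -/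
theorem hartley_mulVec_sine_vector (N : ℕ) [NeZero N] (hN : 0 < N) (a : ℕ)
    (ha1 : 1 ≤ a) (ha2 : a ≤ N - 1)
    (v : ZMod (2 * N) → ℂ)
    (hv : v = fun x =>
      ((if x = ((a : ℕ) : ZMod (2 * N)) then (1 : ℂ) else 0) -
        (if x = ((2 * N - a : ℕ) : ZMod (2 * N)) then (1 : ℂ) else 0)) / Real.sqrt 2)
    (y : ZMod (2 * N)) :
    (hartleyMatrix (2 * N)).mulVec v y =
      ((Real.sin (Real.pi * a * y.val / N) / Real.sqrt N : ℝ) : ℂ) := by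
  subst hv
  have hlt_a : a < 2*N := by omega
  have hlt_b : 2*N - a < 2*N := by omega
  have inst : NeZero (2*N) := ⟨by omega⟩
  have haval : ((a:ℕ) : ZMod (2*N)).val = a := ZMod.val_natCast_of_lt hlt_a
  have hbval : ((2*N - a : ℕ) : ZMod (2*N)).val = 2*N - a := ZMod.val_natCast_of_lt hlt_b
  have hne : ((2*N - a : ℕ) : ZMod (2*N)) ≠ ((a:ℕ) : ZMod (2*N)) := by
    intro h
    have := congrArg ZMod.val h
    rw [haval, hbval] at this
    omega
  have hsum : (hartleyMatrix (2*N)).mulVec (fun x =>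
      ((if x = ((a : ℕ) : ZMod (2 * N)) then (1 : ℂ) else 0) -
        (if x = ((2 * N - a : ℕ) : ZMod (2 * N)) then (1 : ℂ) else 0)) / Real.sqrt 2) y
      = (hartleyMatrix (2*N) y ((a:ℕ) : ZMod (2*N))
          - hartleyMatrix (2*N) y ((2*N - a : ℕ) : ZMod (2*N))) / (Real.sqrt 2 : ℝ) := by
    simp only [Matrix.mulVec, dotProduct, ← mul_div_assoc, mul_sub, mul_ite, mul_one,
      mul_zero, ← Finset.sum_div, Finset.sum_sub_distrib, Finset.sum_ite_eq', Finset.mem_univ,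
      if_true]
  rw [hsum]
  unfold hartleyMatrix
  rw [haval, hbval]
  rw [← Complex.ofReal_sub, ← Complex.ofReal_div, Complex.ofReal_inj]
  have := hartley_aux N a y.val hN (by omega)
  push_cast at this ⊢
  rw [← sub_div]
  linarith [this]
end

section
/- Let N be an integer with N ≥ 2. For each integer a with 1 ≤ a ≤ N − 1, let v_a : ZMod (2N) → ℂ be the vector v_a = (e_a − e_{2N−a})/√2, where e_x is the standard basis vector supported at x. Let H be the Hartley matrix of size 2N. Then for every a with 1 ≤ a ≤ N − 1, H.mulVec v_a = Σ_{y=1}^{N−1} (√(2/N)·sin(π·a·y/N)) • v_y; that is, H preserves the span of {v_1, …, v_{N−1}} and acts on it as the type-I discrete sine transform S^I_{N−1} with entries √(2/N)·sin(π·m·n/N). -/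
/-!
Write `w_c = e_c - e_{-c}` on `ZMod (2N)`, so that `v_b = w_b / √2`. Since
`cas θ - cas (-θ) = 2 sin θ`, the image `H w_c` is the odd vector
`x ↦ 2 sin (2π x c / 2N) / √(2N)`. An odd vector `f` on `ZMod (2N)` equals `∑_{y=1}^{N-1} f y • w_y`: it vanishes at the two
self-inverse points `0` and `N`, and every other point is `y` or `-y` for exactly one
`y ∈ [1, N-1]`. Reading off the coefficients gives the sine transform.
-/

open Real Matrix

theorem cas_periodic : Function.Periodic cas (2 * π) :=
  cos_periodic.add sin_periodic

theorem cas_sub_cas_neg (x : ℝ) : cas x - cas (-x) = 2 * sin x := by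
  simp only [cas, cos_neg, sin_neg]
  ring

theorem Function.Periodic.apply_two_pi_mul_val_neg {φ : ℝ → ℝ} (hφ : Function.Periodic φ (2 * π))
    {M : ℕ} [NeZero M] (y : ZMod M) (k : ℕ) :
    φ (2 * π * (-y).val * k / M) = φ (-(2 * π * y.val * k / M)) := by
  rcases eq_or_ne y 0 with rfl | hy
  · simp
  have hM : (M : ℝ) ≠ 0 := NeZero.ne _
  have hshift : 2 * π * (-y).val * k / M = -(2 * π * y.val * k / M) + k * (2 * π) := by
    rw [ZMod.neg_val, if_neg hy, Nat.cast_sub y.val_le]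
    field_simp
    ring
  rw [hshift, hφ.nat_mul k]

theorem two_div_sqrt_two_mul (x : ℝ) : 2 / √(2 * x) = √(2 / x) := by
  rw [sqrt_mul zero_le_two, sqrt_div zero_le_two, div_mul_eq_div_div, div_sqrt]

noncomputable def oddDelta {M : ℕ} (c : ZMod M) : ZMod M → ℂ :=
  Pi.single c 1 - Pi.single (-c) 1

theorem oddDelta_natCast {M b : ℕ} (hb : b ≤ M) :
    oddDelta (b : ZMod M) = fun x =>
      (if x = (b : ZMod M) then 1 else 0) - (if x = ((M - b : ℕ) : ZMod M) then 1 else 0) := by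
  ext x
  simp [oddDelta, Pi.single_apply, Nat.cast_sub hb]

theorem hartleyMatrix_mulVec_oddDelta {M : ℕ} [NeZero M] (c : ZMod M) :
    hartleyMatrix M *ᵥ oddDelta c =
      fun x => ((2 * sin (2 * π * x.val * c.val / M) / √M : ℝ) : ℂ) := by
  ext x
  have hneg : cas (2 * π * x.val * (-c).val / M) = cas (-(2 * π * x.val * c.val / M)) := by
    rw [mul_right_comm, cas_periodic.apply_two_pi_mul_val_neg, mul_right_comm]
  simp only [oddDelta, mulVec_sub, mulVec_single_one, Pi.sub_apply, col_apply, hartleyMatrix,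
    hneg, ← Complex.ofReal_sub, ← sub_div, cas_sub_cas_neg]

theorem eq_sum_smul_oddDelta_of_odd (N : ℕ) [NeZero N] (f : ZMod (2 * N) → ℂ)
    (hf : ∀ x, f (-x) = -f x) :
    f = ∑ y ∈ Finset.Icc 1 (N - 1), f y • oddDelta (y : ZMod (2 * N)) := by
  ext x
  have hsum : ∀ z : ZMod (2 * N),
      ∑ y ∈ Finset.Icc 1 (N - 1), (if z = y then f y else 0) =
        if z.val ∈ Finset.Icc 1 (N - 1) then f z else 0 := fun z => by
    have hval : ∀ y ∈ Finset.Icc 1 (N - 1), z = y ↔ z.val = y := fun y hy => by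
      rw [← (ZMod.val_injective _).eq_iff, ZMod.val_natCast_of_lt]
      grind
    rw [Finset.sum_congr rfl fun y hy => if_congr (hval y hy) rfl rfl, Finset.sum_ite_eq,
      ZMod.natCast_zmod_val]
  simp only [Finset.sum_apply, Pi.smul_apply, oddDelta, Pi.sub_apply, Pi.single_apply,
    smul_eq_mul, mul_sub, mul_ite, mul_one, mul_zero, Finset.sum_sub_distrib,
    ← neg_eq_iff_eq_neg, hsum, hf]
  by_cases hxN : -x = x
  · have hfx : f x = 0 := self_eq_neg.mp (by simpa [hxN] using hf x)
    simp [hfx]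
  have hx0 : x ≠ 0 := by rintro rfl; simp at hxN
  have hnegval : (-x).val = 2 * N - x.val := by rw [ZMod.neg_val, if_neg hx0]
  have hxval : x.val ≠ N := fun h => hxN (ZMod.val_injective _ (by omega))
  have hexactly : x.val ∈ Finset.Icc 1 (N - 1) ↔ (-x).val ∉ Finset.Icc 1 (N - 1) := by
    have := (ZMod.val_ne_zero x).mpr hx0
    have := x.val_lt
    simp only [Finset.mem_Icc]
    omega
  by_cases hx : x.val ∈ Finset.Icc 1 (N - 1)
  · simp [hx, hexactly.mp hx]
  · simp [hx, not_not.mp (mt hexactly.mpr hx)]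

theorem hartley_acts_as_sineTransform_general (N : ℕ) [NeZero N]
    (v : ℕ → ZMod (2 * N) → ℂ)
    (hv : ∀ a : ℕ, v a = fun x =>
      ((if x = ((a : ℕ) : ZMod (2 * N)) then (1 : ℂ) else 0) -
        (if x = ((2 * N - a : ℕ) : ZMod (2 * N)) then (1 : ℂ) else 0)) / Real.sqrt 2)
    (a : ℕ) (ha2 : a ≤ N - 1) :
    (hartleyMatrix (2 * N)).mulVec (v a) =
      ∑ y ∈ Finset.Icc 1 (N - 1),
        ((Real.sqrt (2 / N) * Real.sin (Real.pi * a * y / N) : ℝ) : ℂ) • v y := by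
  have hv_eq : ∀ b ≤ N - 1, v b = ((√2 : ℝ) : ℂ)⁻¹ • oddDelta (b : ZMod (2 * N)) := fun b hb => by
    rw [hv, oddDelta_natCast (by omega)]
    ext x
    simp [div_eq_inv_mul]
  have hval : ∀ b ≤ N - 1, (b : ZMod (2 * N)).val = b := fun b hb =>
    ZMod.val_natCast_of_lt (by have := NeZero.pos N; omega)
  set f : ZMod (2 * N) → ℂ := fun x =>
    ((2 * sin (2 * π * x.val * a / (2 * N : ℕ)) / √(2 * N : ℕ) : ℝ) : ℂ) with hf
  have hodd : ∀ x, f (-x) = -f x := fun x => by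
    simp only [hf, sin_periodic.apply_two_pi_mul_val_neg, sin_neg]
    push_cast
    ring
  rw [hv_eq a ha2, mulVec_smul, hartleyMatrix_mulVec_oddDelta, hval a ha2, ← hf,
    eq_sum_smul_oddDelta_of_odd N f hodd, Finset.smul_sum]
  refine Finset.sum_congr rfl fun y hyI => ?_
  have hy := (Finset.mem_Icc.mp hyI).2
  have hθ : 2 * π * y * a / (2 * N) = π * a * y / N := by
    have hN : (N : ℝ) ≠ 0 := NeZero.ne _
    field_simp
  simp only [hv_eq y hy, smul_smul, hf, hval y hy]
  rw [mul_div_right_comm, Nat.cast_mul, Nat.cast_ofNat, two_div_sqrt_two_mul, hθ,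
    mul_comm (_⁻¹)]

/-- The Hartley matrix of size `2N` maps each vector `v_a = (e_a - e_{2N-a})/√2`,
`1 ≤ a ≤ N-1`, to the combination `∑_{y=1}^{N-1} √(2/N) sin(π a y / N) • v_y`; i.e.
it acts on the span of the `v_a` as the type-I discrete sine transform. -/
theorem hartley_acts_as_sineTransform (N : ℕ) [NeZero N] (hN : 2 ≤ N)
    (v : ℕ → ZMod (2 * N) → ℂ)
    (hv : ∀ a : ℕ, v a = fun x =>
      ((if x = ((a : ℕ) : ZMod (2 * N)) then (1 : ℂ) else 0) -
        (if x = ((2 * N - a : ℕ) : ZMod (2 * N)) then (1 : ℂ) else 0)) / Real.sqrt 2)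
    (a : ℕ) (ha1 : 1 ≤ a) (ha2 : a ≤ N - 1) :
    (hartleyMatrix (2 * N)).mulVec (v a) =
      ∑ y ∈ Finset.Icc 1 (N - 1),
        ((Real.sqrt (2 / N) * Real.sin (Real.pi * a * y / N) : ℝ) : ℂ) • v y :=
  hartley_acts_as_sineTransform_general N v hv a ha2
end
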